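/- Let J_1, J_2 ⊆ {1,…,m} be disjoint nonempty subsets with |J_1| + |J_2| ≤ m − 3, and pick a ∈ J_1, b ∈ J_2 and c ∉ J_1 ∪ J_2. Let v ∈ ℚ^m be the vector with entry 1 at positions a and b, entry 2 at position c, and 0 elsewhere. Then v lies in the convex cone generated by all u_{ij} (equivalently v ≥ 0 and 2 v_l ≤ v_1+⋯+v_m for all l) and satisfies Σ_{i∈J_1} v_i = Σ_{j∈J_2} v_j, but v does not lie in the convex cone generated over ℚ_{≥0} by {u_{ij} : |{i,j} ∩ J_1| = |{i,j} ∩ J_2|}. In particular, the latter cone is a proper subset of the intersection of the cone generated by all u_{ij} with the hyperplane ℋ_{J_1,J_2} = {s : Σ_{i∈J_1} s_i = Σ_{j∈J_2} s_j}. -/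
import Mathlib


/-- The convex cone in `ℚ^m` generated over `ℚ_{≥0}` by a set `S`:
all finite nonnegative rational combinations of elements of `S`. -/
def coneGen {m : ℕ} (S : Set (Fin m → ℚ)) : Set (Fin m → ℚ) :=
  {v | ∃ (s : Finset (Fin m → ℚ)) (c : (Fin m → ℚ) → ℚ),
    (∀ w ∈ s, 0 ≤ c w ∧ w ∈ S) ∧ v = ∑ w ∈ s, c w • w}

/-- The vector `u_{ij} ∈ ℚ^m` with entries `1` at positions `i` and `j` and `0`
elsewhere. -/
def uvec {m : ℕ} (i j : Fin m) : Fin m → ℚ := fun l => if l = i ∨ l = j then 1 else 0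

lemma uvec_comm {m : ℕ} (i j : Fin m) : uvec i j = uvec j i := by
  funext l; simp [uvec, or_comm]

lemma uvec_nonneg {m : ℕ} (i j l : Fin m) : 0 ≤ uvec i j l := by
  unfold uvec; split <;> norm_num

lemma uvec_mem {m : ℕ} {i j : Fin m} (h : i ≠ j) :
    uvec i j ∈ {w : Fin m → ℚ | ∃ i j, i < j ∧ w = uvec i j} := by
  rcases lt_or_gt_of_ne h with h' | h'
  · exact ⟨i, j, h', rfl⟩
  · exact ⟨j, i, h', uvec_comm i j⟩

lemma sum_uvec {m : ℕ} (i j : Fin m) (J : Finset (Fin m)) :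
    ∑ l ∈ J, uvec i j l = (({i, j} : Finset (Fin m)) ∩ J).card := by
  classical
  rw [show (∑ l ∈ J, uvec i j l) = ∑ l ∈ J, (if l = i ∨ l = j then (1:ℚ) else 0) from rfl,
    Finset.sum_boole]
  congr 1
  have : J.filter (fun l => l = i ∨ l = j) = ({i, j} : Finset (Fin m)) ∩ J := by
    ext l
    simp [Finset.mem_filter, Finset.mem_inter, Finset.mem_insert, and_comm]
  rw [this]

lemma balanced_other {m : ℕ} {J₁ J₂ : Finset (Fin m)} (hd : Disjoint J₁ J₂) {c k : Fin m}
    (hc1 : c ∉ J₁) (hc2 : c ∉ J₂)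
    (hbal : (({c, k} : Finset (Fin m)) ∩ J₁).card = (({c, k} : Finset (Fin m)) ∩ J₂).card) :
    k ∉ J₁ ∧ k ∉ J₂ := by
  classical
  rw [show ({c, k} : Finset (Fin m)) = insert c {k} from rfl,
    Finset.insert_inter_of_notMem hc1, Finset.insert_inter_of_notMem hc2] at hbal
  constructor
  · intro hk
    have h1 : ({k} : Finset (Fin m)) ∩ J₁ = {k} := Finset.singleton_inter_of_mem hk
    have hk2 : k ∉ J₂ := Finset.disjoint_left.mp hd hk
    have h2 : ({k} : Finset (Fin m)) ∩ J₂ = ∅ := Finset.singleton_inter_of_notMem hk2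
    rw [h1, h2] at hbal; simp at hbal
  · intro hk
    have h1 : ({k} : Finset (Fin m)) ∩ J₂ = {k} := Finset.singleton_inter_of_mem hk
    have hk1 : k ∉ J₁ := Finset.disjoint_right.mp hd hk
    have h2 : ({k} : Finset (Fin m)) ∩ J₁ = ∅ := Finset.singleton_inter_of_notMem hk1
    rw [h1, h2] at hbal; simp at hbal

lemma coneGen_mono {m : ℕ} {S T : Set (Fin m → ℚ)} (h : S ⊆ T) : coneGen S ⊆ coneGen T := by
  rintro v ⟨s, c, hm, rfl⟩
  exact ⟨s, c, fun w hw => ⟨(hm w hw).1, h (hm w hw).2⟩, rfl⟩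

lemma coneGen_hyper {m : ℕ} (J₁ J₂ : Finset (Fin m)) :
    ∀ v ∈ coneGen {w : Fin m → ℚ | ∃ i j : Fin m, i < j ∧
        (({i, j} : Finset (Fin m)) ∩ J₁).card = (({i, j} : Finset (Fin m)) ∩ J₂).card ∧
        w = uvec i j},
      ∑ i ∈ J₁, v i = ∑ j ∈ J₂, v j := by
  rintro v ⟨s, c, hm, rfl⟩
  have key : ∀ J : Finset (Fin m),
      ∑ l ∈ J, (∑ w ∈ s, c w • w) l = ∑ w ∈ s, c w * ∑ l ∈ J, w l := by
    intro J
    simp only [Finset.sum_apply, Pi.smul_apply, smul_eq_mul, Finset.mul_sum]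
    exact Finset.sum_comm
  rw [key J₁, key J₂]
  refine Finset.sum_congr rfl fun w hw => ?_
  obtain ⟨i, j, hij, hbal, rfl⟩ := (hm w hw).2
  rw [sum_uvec, sum_uvec, hbal]

/-- Let `J₁, J₂ ⊆ {1,…,m}` be disjoint nonempty subsets with `|J₁| + |J₂| ≤ m − 3`,
and pick `a ∈ J₁`, `b ∈ J₂` and `c ∉ J₁ ∪ J₂`. The vector `v` with entry `1` at
positions `a` and `b`, entry `2` at position `c`, and `0` elsewhere lies in the
cone generated by all `u_{ij}` and satisfies `Σ_{i∈J₁} v_i = Σ_{j∈J₂} v_j`, but it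
does not lie in the cone generated by the balanced vectors
`{u_{ij} : |{i,j} ∩ J₁| = |{i,j} ∩ J₂|}`. In particular the latter cone is a
proper subset of the intersection of the full cone with the hyperplane
`ℋ_{J₁,J₂}`. -/
theorem balanced_cone_proper_in_wall
    {m : ℕ} (J₁ J₂ : Finset (Fin m)) (hd : Disjoint J₁ J₂)
    (h1 : J₁.Nonempty) (h2 : J₂.Nonempty) (hcard : J₁.card + J₂.card ≤ m - 3)
    (a b c : Fin m) (ha : a ∈ J₁) (hb : b ∈ J₂) (hc1 : c ∉ J₁) (hc2 : c ∉ J₂)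
    (v : Fin m → ℚ)
    (hv : v = fun l => if l = a then 1 else if l = b then 1 else if l = c then 2 else 0) :
    v ∈ coneGen {w | ∃ i j : Fin m, i < j ∧ w = uvec i j} ∧
      (∑ i ∈ J₁, v i = ∑ j ∈ J₂, v j) ∧
      v ∉ coneGen {w | ∃ i j : Fin m, i < j ∧
        (({i, j} : Finset (Fin m)) ∩ J₁).card = (({i, j} : Finset (Fin m)) ∩ J₂).card ∧
        w = uvec i j} ∧
      coneGen {w | ∃ i j : Fin m, i < j ∧
          (({i, j} : Finset (Fin m)) ∩ J₁).card = (({i, j} : Finset (Fin m)) ∩ J₂).card ∧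
          w = uvec i j} ⊂
        coneGen {w | ∃ i j : Fin m, i < j ∧ w = uvec i j} ∩
          {s | ∑ i ∈ J₁, s i = ∑ j ∈ J₂, s j} := by
  classical
  have hab : a ≠ b := fun h => (Finset.disjoint_left.mp hd ha) (h ▸ hb)
  have hac : a ≠ c := fun h => hc1 (h ▸ ha)
  have hbc : b ≠ c := fun h => hc2 (h ▸ hb)
  -- v = uvec a c + uvec b c
  have hvsum : v = uvec a c + uvec b c := by
    subst hv; funext l
    simp only [Pi.add_apply, uvec]
    by_cases h1 : l = a <;> by_cases h2 : l = b <;> by_cases h3 : l = c <;>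
      simp_all <;> norm_num
  -- Part 1
  have part1 : v ∈ coneGen {w : Fin m → ℚ | ∃ i j : Fin m, i < j ∧ w = uvec i j} := by
    have hne : uvec a c ≠ uvec b c := by
      intro h
      have := congrFun h a
      simp [uvec, hab, hac] at this
    refine ⟨{uvec a c, uvec b c}, fun _ => 1, ?_, ?_⟩
    · intro w hw
      rcases Finset.mem_insert.mp hw with rfl | hw
      · exact ⟨zero_le_one, uvec_mem hac⟩
      · rw [Finset.mem_singleton] at hw
        subst hw
        exact ⟨zero_le_one, uvec_mem hbc⟩
    · rw [Finset.sum_pair hne]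
      simpa using hvsum
  -- Part 2
  have part2 : ∑ i ∈ J₁, v i = ∑ j ∈ J₂, v j := by
    have e1 : ∀ i ∈ J₁, v i = if i = a then 1 else 0 := by
      intro i hi
      have hib : i ≠ b := fun h => (Finset.disjoint_left.mp hd hi) (h ▸ hb)
      have hic : i ≠ c := fun h => hc1 (h ▸ hi)
      by_cases h : i = a <;> simp [hv, h, hib, hic]
    have e2 : ∀ j ∈ J₂, v j = if j = b then 1 else 0 := by
      intro j hj
      have hja : j ≠ a := fun h => (Finset.disjoint_right.mp hd hj) (h ▸ ha)
      have hjc : j ≠ c := fun h => hc2 (h ▸ hj)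
      by_cases h : j = b <;> simp [hv, h, hja, hjc]
    rw [Finset.sum_congr rfl e1, Finset.sum_congr rfl e2,
      Finset.sum_ite_eq' J₁ a (fun _ => (1:ℚ)), Finset.sum_ite_eq' J₂ b (fun _ => (1:ℚ))]
    simp [ha, hb]
  -- Part 3
  have part3 : v ∉ coneGen {w : Fin m → ℚ | ∃ i j : Fin m, i < j ∧
      (({i, j} : Finset (Fin m)) ∩ J₁).card = (({i, j} : Finset (Fin m)) ∩ J₂).card ∧
      w = uvec i j} := by
    rintro ⟨s, coef, hm, hsum⟩
    have hvc : v c = 2 := by simp [hv, Ne.symm hac, Ne.symm hbc]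
    have hvT : ∑ l ∈ Finset.univ \ ({a, b, c} : Finset (Fin m)), v l = 0 := by
      refine Finset.sum_eq_zero fun l hl => ?_
      simp only [Finset.mem_sdiff, Finset.mem_insert, Finset.mem_singleton, Finset.mem_univ,
        true_and, not_or] at hl
      simp [hv, hl.1, hl.2.1, hl.2.2]
    have key : ∀ w ∈ s, w c ≤ ∑ l ∈ Finset.univ \ ({a, b, c} : Finset (Fin m)), w l := by
      intro w hw
      obtain ⟨i, j, hij, hbal, rfl⟩ := (hm w hw).2
      rcases eq_or_ne i c with rfl | hic
      · obtain ⟨hj1, hj2⟩ := balanced_other hd hc1 hc2 hbal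
        have hja : j ≠ a := fun h => hj1 (h ▸ ha)
        have hjb : j ≠ b := fun h => hj2 (h ▸ hb)
        have hjc : j ≠ i := hij.ne'
        have hjT : j ∈ Finset.univ \ ({a, b, i} : Finset (Fin m)) := by
          simp [Finset.mem_sdiff, hja, hjb, hjc]
        have h1 : uvec i j i = 1 := by simp [uvec]
        have h2 : uvec i j j = 1 := by simp [uvec]
        rw [h1, ← h2]
        exact Finset.single_le_sum (fun l _ => uvec_nonneg _ _ _) hjT
      · rcases eq_or_ne j c with rfl | hjc
        · rw [Finset.pair_comm] at hbal
          obtain ⟨hi1, hi2⟩ := balanced_other hd hc1 hc2 hbal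
          have hia : i ≠ a := fun h => hi1 (h ▸ ha)
          have hib : i ≠ b := fun h => hi2 (h ▸ hb)
          have hiT : i ∈ Finset.univ \ ({a, b, j} : Finset (Fin m)) := by
            simp [Finset.mem_sdiff, hia, hib, hic]
          have h1 : uvec i j j = 1 := by simp [uvec]
          have h2 : uvec i j i = 1 := by simp [uvec]
          rw [h1, ← h2]
          exact Finset.single_le_sum (fun l _ => uvec_nonneg _ _ _) hiT
        · have hz : uvec i j c = 0 := by simp [uvec, Ne.symm hic, Ne.symm hjc]
          rw [hz]
          exact Finset.sum_nonneg fun l _ => uvec_nonneg _ _ _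
    have hle : v c ≤ ∑ l ∈ Finset.univ \ ({a, b, c} : Finset (Fin m)), v l := by
      rw [hsum]
      have e1 : (∑ w ∈ s, coef w • w) c = ∑ w ∈ s, coef w * w c := by
        simp [Finset.sum_apply]
      have e2 : ∑ l ∈ Finset.univ \ ({a, b, c} : Finset (Fin m)), (∑ w ∈ s, coef w • w) l
          = ∑ w ∈ s, coef w * ∑ l ∈ Finset.univ \ ({a, b, c} : Finset (Fin m)), w l := by
        simp only [Finset.sum_apply, Pi.smul_apply, smul_eq_mul, Finset.mul_sum]
        exact Finset.sum_comm
      rw [e1, e2]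
      exact Finset.sum_le_sum fun w hw =>
        mul_le_mul_of_nonneg_left (key w hw) (hm w hw).1
    rw [hvc, hvT] at hle
    norm_num at hle
  refine ⟨part1, part2, part3, ?_, ?_⟩
  · intro w hw
    exact ⟨coneGen_mono (fun u hu => by
      obtain ⟨i, j, hij, _, rfl⟩ := hu; exact ⟨i, j, hij, rfl⟩) hw,
      coneGen_hyper J₁ J₂ w hw⟩
  · intro hsub
    exact part3 (hsub ⟨part1, part2⟩)
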